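/- Let ε > 0, n ≥ 1, m ≥ 1, and for each player i ∈ {1,…,n} let v_i be a multi-unit valuation on m items and let K_i ⊆ {0,…,m} with 0 ∈ K_i be a set of quantities such that 0 ≤ v_i(s) − v_i^{K_i}(s) ≤ (ε/(2n))·v_i(m) for every s ∈ {0,…,m}. If the allocation (s_1,…,s_n) satisfies Σ_{i=1}^n v_i^{K_i}(s_i) ≥ (1 − ε/2) · max over allocations (t_1,…,t_n) of Σ_{i=1}^n v_i^{K_i}(t_i), then Σ_{i=1}^n v_i(s_i) ≥ (1 − ε) · Σ_{i=1}^n v_i(o_i) for every allocation (o_1,…,o_n). -/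
import Mathlib


/-- Projection of a multi-unit valuation `v` onto a set of quantities `K`
(containing `0`): `v^K(s) = max { v(x) : x ∈ K, x ≤ s }`. -/
noncomputable def proj (K : Finset ℕ) (v : ℕ → ℝ) (s : ℕ) : ℝ :=
  sSup (v '' {x | x ∈ K ∧ x ≤ s})

lemma proj_bddAbove (K : Finset ℕ) (v : ℕ → ℝ) (s : ℕ) :
    BddAbove (v '' {x | x ∈ K ∧ x ≤ s}) :=
  ((K.finite_toSet.subset (fun x hx => hx.1)).image v).bddAbove

lemma le_proj (K : Finset ℕ) (v : ℕ → ℝ) (s : ℕ) (hK0 : 0 ∈ K) :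
    v 0 ≤ proj K v s :=
  le_csSup (proj_bddAbove K v s) ⟨0, ⟨hK0, Nat.zero_le _⟩, rfl⟩

lemma proj_zero (K : Finset ℕ) (v : ℕ → ℝ) (hK0 : 0 ∈ K) :
    proj K v 0 = v 0 := by
  have hset : {x | x ∈ K ∧ x ≤ 0} = ({0} : Set ℕ) := by
    ext x
    simp only [Set.mem_setOf_eq, Set.mem_singleton_iff, Nat.le_zero]
    constructor
    · exact fun h => h.2
    · rintro rfl; exact ⟨hK0, rfl⟩
  rw [proj, hset, Set.image_singleton, csSup_singleton]

/-- if each `v_i^{K_i}` approximates `v_i` within additive error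
`(ε/(2n))·v_i(m)` at every quantity, then any allocation that is a
`(1 − ε/2)`-approximation for the projected valuations is a
`(1 − ε)`-approximation for the original valuations. -/
theorem projected_approximation_transfers
    (ε : ℝ) (hε : 0 < ε) (n m : ℕ) (hn : 1 ≤ n) (hm : 1 ≤ m)
    (v : Fin n → ℕ → ℝ)
    (hv0 : ∀ i, v i 0 = 0)
    (hvmono : ∀ i, ∀ s t : ℕ, s ≤ t → t ≤ m → v i s ≤ v i t)
    (K : Fin n → Finset ℕ)
    (hK0 : ∀ i, 0 ∈ K i) (hKsub : ∀ i, ∀ x ∈ K i, x ≤ m)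
    (happrox : ∀ i, ∀ s : ℕ, s ≤ m →
      0 ≤ v i s - proj (K i) (v i) s ∧
        v i s - proj (K i) (v i) s ≤ ε / (2 * n) * v i m)
    (salloc : Fin n → ℕ) (hsalloc : ∑ i, salloc i ≤ m)
    (hmax : ∀ t : Fin n → ℕ, (∑ i, t i ≤ m) →
      (1 - ε / 2) * ∑ i, proj (K i) (v i) (t i) ≤ ∑ i, proj (K i) (v i) (salloc i)) :
    ∀ o : Fin n → ℕ, (∑ i, o i ≤ m) →
      (1 - ε) * ∑ i, v i (o i) ≤ ∑ i, v i (salloc i) := by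
  intro o ho
  have hn' : (1:ℝ) ≤ (n:ℝ) := by exact_mod_cast hn
  have hnpos : (0:ℝ) < (n:ℝ) := lt_of_lt_of_le one_pos hn'
  have hvnn : ∀ i, ∀ s, s ≤ m → 0 ≤ v i s := by
    intro i s hs
    have := hvmono i 0 s (Nat.zero_le _) hs
    rwa [hv0 i] at this
  have hsi : ∀ i, salloc i ≤ m := fun i =>
    le_trans (Finset.single_le_sum (fun j _ => Nat.zero_le _) (Finset.mem_univ i)) hsalloc
  have hoi : ∀ i, o i ≤ m := fun i =>
    le_trans (Finset.single_le_sum (fun j _ => Nat.zero_le _) (Finset.mem_univ i)) ho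
  set a : ℝ := ε / (2 * (n:ℝ)) with ha
  set O : ℝ := ∑ i, v i (o i) with hOdef
  set A : ℝ := ∑ i, v i m with hAdef
  set S' : ℝ := ∑ i, proj (K i) (v i) (salloc i) with hS'def
  set SS : ℝ := ∑ i, v i (salloc i) with hSSdef
  have hO0 : 0 ≤ O := Finset.sum_nonneg fun i _ => hvnn i _ (hoi i)
  have hSS0 : 0 ≤ SS := Finset.sum_nonneg fun i _ => hvnn i _ (hsi i)
  have h1 : S' ≤ SS := by
    rw [hS'def, hSSdef]
    exact Finset.sum_le_sum fun i _ => by linarith [(happrox i (salloc i) (hsi i)).1]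
  by_cases hε1 : 1 ≤ ε
  · nlinarith
  push_neg at hε1
  have ha0 : 0 < a := by rw [ha]; positivity
  have haε2 : a ≤ ε / 2 := by
    rw [ha, div_le_div_iff₀ (by positivity) (by norm_num)]
    nlinarith
  have hn0 : (n:ℝ) ≠ 0 := ne_of_gt hnpos
  have han : a * (n:ℝ) = ε / 2 := by
    rw [ha]; field_simp
  have hS'0 : 0 ≤ S' := by
    rw [hS'def]
    refine Finset.sum_nonneg fun i _ => ?_
    have := le_proj (K i) (v i) (salloc i) (hK0 i)
    rwa [hv0 i] at this
  have hA0 : 0 ≤ A := Finset.sum_nonneg fun i _ => hvnn i m le_rfl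
  -- main inequality from the optimal allocation o
  have hPo : O - a * A ≤ ∑ i, proj (K i) (v i) (o i) := by
    have h : ∀ i ∈ Finset.univ, v i (o i) - a * v i m ≤ proj (K i) (v i) (o i) :=
      fun i _ => by linarith [(happrox i (o i) (hoi i)).2]
    calc O - a * A = ∑ i, (v i (o i) - a * v i m) := by
          rw [hOdef, hAdef, Finset.mul_sum, ← Finset.sum_sub_distrib]
      _ ≤ _ := Finset.sum_le_sum h
  have h2 : (1 - ε/2) * (O - a * A) ≤ S' :=
    le_trans (mul_le_mul_of_nonneg_left hPo (by linarith)) (hmax o ho)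
  -- single-player allocations
  have h3 : ∀ j, (1 - ε/2) * ((1 - a) * v j m) ≤ S' := by
    intro j
    have hsum : (∑ i, (if i = j then m else 0)) ≤ m := by
      simp
    have hmaxj := hmax (fun i => if i = j then m else 0) hsum
    have hproj : ∑ i, proj (K i) (v i) (if i = j then m else 0) = proj (K j) (v j) m := by
      rw [Finset.sum_eq_single j]
      · simp
      · intro i _ hij
        simp only [hij, if_false]
        rw [proj_zero (K i) (v i) (hK0 i), hv0 i]
      · intro h; exact absurd (Finset.mem_univ j) h
    rw [hproj] at hmaxj
    have hp := (happrox j m le_rfl).2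
    have hle : (1 - a) * v j m ≤ proj (K j) (v j) m := by
      have hexp : (1 - a) * v j m = v j m - a * v j m := by ring
      rw [hexp]; linarith
    calc (1 - ε/2) * ((1 - a) * v j m) ≤ (1 - ε/2) * proj (K j) (v j) m :=
          mul_le_mul_of_nonneg_left hle (by linarith)
      _ ≤ S' := hmaxj
  have h3' : (1 - ε/2) * ((1 - a) * A) ≤ (n:ℝ) * S' := by
    have h := Finset.sum_le_sum (fun j (_ : j ∈ Finset.univ) => h3 j)
    have hl : ∑ j : Fin n, (1 - ε/2) * ((1 - a) * v j m) = (1 - ε/2) * ((1 - a) * A) := by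
      rw [hAdef, Finset.mul_sum, Finset.mul_sum]
    have hr : ∑ _j : Fin n, S' = (n:ℝ) * S' := by
      rw [Finset.sum_const, Finset.card_univ, Fintype.card_fin, nsmul_eq_mul]
    rw [hl, hr] at h
    exact h
  -- combine
  have hb0 : (0:ℝ) ≤ 1 - a := by linarith
  have step2 := mul_le_mul_of_nonneg_left h2 hb0
  have step3 := mul_le_mul_of_nonneg_left h3' ha0.le
  have han2 : a * ((n:ℝ) * S') = ε / 2 * S' := by rw [← mul_assoc, han]
  rw [han2] at step3
  have step4 : (1 - a) * (1 - ε/2) * O ≤ (1 - a + ε/2) * S' := by linarith [step2, step3]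
  have step5 : (1 - ε) * (1 - a + ε/2) ≤ (1 - a) * (1 - ε/2) := by
    nlinarith [mul_nonneg hε.le (show (0:ℝ) ≤ ε - a by linarith)]
  have hX : (0:ℝ) < 1 - a + ε/2 := by linarith
  have step6 : (1 - a + ε/2) * ((1 - ε) * O) ≤ (1 - a + ε/2) * S' := by
    linarith [mul_le_mul_of_nonneg_right step5 hO0, step4]
  have := le_of_mul_le_mul_left step6 hX
  linarith
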